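/- For every ε > 0, the set X_ε = { x ∈ ℝ : ∃ positive integer n, |x − √n| < ε/√n or |x + √n| < ε/√n } has constant density: there exist N > 0 and c > 0 such that for every r ∈ ℝ, the Lebesgue measure of X_ε ∩ [r, r+N] is at least c·N. -/
import Mathlib
open MeasureTheory Real

lemma key16 (ε : ℝ) (hε : 0 < ε) (hε1 : ε ≤ 1) (s : ℝ) (hs : 1 ≤ s) :
    ENNReal.ofReal (2*ε) ≤ volume ({x : ℝ | ∃ n : ℕ, 0 < n ∧
      (|x - Real.sqrt n| < ε / Real.sqrt n ∨ |x + Real.sqrt n| < ε / Real.sqrt n)} ∩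
      Set.Icc s (s+4)) := by
  set X : Set ℝ := {x : ℝ | ∃ n : ℕ, 0 < n ∧
      (|x - Real.sqrt n| < ε / Real.sqrt n ∨ |x + Real.sqrt n| < ε / Real.sqrt n)} with hX
  set k := ⌈s^2⌉₊ with hkdef
  set m := ⌊(s+4)^2⌋₊ with hmdef
  have hs0 : (0:ℝ) < s := by linarith
  have hk1 : (k:ℝ) < s^2 + 1 := Nat.ceil_lt_add_one (by positivity)
  have hk2 : s^2 ≤ (k:ℝ) := Nat.le_ceil _
  have hm1 : (s+4)^2 - 1 < (m:ℝ) := Nat.sub_one_lt_floor _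
  have hm2 : (m:ℝ) ≤ (s+4)^2 := Nat.floor_le (by positivity)
  have hkm : (k:ℝ) < (m:ℝ) := by nlinarith
  set I : ℕ → Set ℝ := fun n => Set.Ioo (Real.sqrt n) (Real.sqrt (n + ε)) with hI
  -- facts about n in range
  have hfacts : ∀ n ∈ Finset.Ico k m, s ≤ Real.sqrt n ∧ Real.sqrt (n + ε) ≤ s + 4 ∧
      1 ≤ (n:ℝ) := by
    intro n hn
    simp only [Finset.mem_Ico] at hn
    have h1 : s^2 ≤ (n:ℝ) := le_trans hk2 (by exact_mod_cast Nat.cast_le.2 hn.1)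
    have h2 : (n:ℝ) + 1 ≤ (m:ℝ) := by exact_mod_cast Nat.succ_le_of_lt hn.2
    have h3 : (n:ℝ) + ε ≤ (s+4)^2 := by linarith
    have hn1 : 1 ≤ (n:ℝ) := by nlinarith
    refine ⟨?_, ?_, hn1⟩
    · rw [Real.le_sqrt' hs0]; exact h1
    · calc Real.sqrt (n + ε) ≤ Real.sqrt ((s+4)^2) := Real.sqrt_le_sqrt h3
        _ = s + 4 := Real.sqrt_sq (by linarith)
  have hsub : ∀ n ∈ Finset.Ico k m, I n ⊆ X ∩ Set.Icc s (s+4) := by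
    intro n hn x hx
    obtain ⟨h1, h2, h3⟩ := hfacts n hn
    obtain ⟨hx1, hx2⟩ := hx
    have hn0 : 0 < n := by exact_mod_cast lt_of_lt_of_le zero_lt_one (by exact_mod_cast h3)
    have hrn : (0:ℝ) < Real.sqrt n := Real.sqrt_pos.2 (by positivity)
    constructor
    · refine ⟨n, hn0, Or.inl ?_⟩
      rw [abs_lt]
      constructor
      · linarith [div_pos hε hrn]
      · have hlt : Real.sqrt (n + ε) < Real.sqrt n + ε / Real.sqrt n := by
          rw [Real.sqrt_lt' (by positivity)]
          have e1 : Real.sqrt n ^ 2 = (n:ℝ) := Real.sq_sqrt (by positivity)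
          have e2 : Real.sqrt n * (ε / Real.sqrt n) = ε := by
            field_simp
          nlinarith [sq_nonneg (ε / Real.sqrt n)]
        linarith
    · exact ⟨by linarith, by linarith⟩
  have hdisj : (↑(Finset.Ico k m) : Set ℕ).PairwiseDisjoint I := by
    intro a ha b hb hab
    have key : ∀ a b : ℕ, a < b → Disjoint (I a) (I b) := by
      intro a b h
      have : Real.sqrt (a + ε) ≤ Real.sqrt b := by
        apply Real.sqrt_le_sqrt
        have : (a:ℝ) + 1 ≤ b := by exact_mod_cast Nat.succ_le_of_lt h
        linarith
      rw [Set.disjoint_left]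
      intro x hx1 hx2
      exact absurd (lt_of_le_of_lt this hx2.1) (not_lt.2 (le_of_lt hx1.2))
    rcases lt_or_gt_of_ne hab with h | h
    · exact key a b h
    · exact (key b a h).symm
  have hmeas : volume (⋃ n ∈ Finset.Ico k m, I n) = ∑ n ∈ Finset.Ico k m, volume (I n) :=
    measure_biUnion_finset hdisj (fun n _ => measurableSet_Ioo)
  have hlen : ∀ n ∈ Finset.Ico k m,
      ENNReal.ofReal (ε / (2*(s+4))) ≤ volume (I n) := by
    intro n hn
    obtain ⟨h1, h2, h3⟩ := hfacts n hn
    rw [hI]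
    simp only [Real.volume_Ioo]
    apply ENNReal.ofReal_le_ofReal
    set a := Real.sqrt n with ha
    set b := Real.sqrt (n + ε) with hb
    have hab : a ≤ b := Real.sqrt_le_sqrt (by linarith)
    have ea : a^2 = (n:ℝ) := Real.sq_sqrt (by positivity)
    have eb : b^2 = (n:ℝ) + ε := Real.sq_sqrt (by nlinarith)
    have ha4 : a ≤ s + 4 := le_trans hab h2
    rw [div_le_iff₀ (by linarith)]
    nlinarith
  have hsum : ENNReal.ofReal (2*ε) ≤ ∑ n ∈ Finset.Ico k m, volume (I n) := by
    calc ENNReal.ofReal (2*ε)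
        ≤ (Finset.Ico k m).card • ENNReal.ofReal (ε / (2*(s+4))) := by
          rw [Nat.card_Ico, nsmul_eq_mul, ← ENNReal.ofReal_natCast,
            ← ENNReal.ofReal_mul (by positivity)]
          apply ENNReal.ofReal_le_ofReal
          have hc : ((m - k : ℕ) : ℝ) = (m:ℝ) - (k:ℝ) := by
            rw [Nat.cast_sub (le_of_lt (by exact_mod_cast hkm))]
          rw [hc]
          have h8 : 8*s + 14 ≤ (m:ℝ) - (k:ℝ) := by nlinarith
          have hpos : (0:ℝ) < 2*(s+4) := by linarith
          rw [← mul_div_assoc, le_div_iff₀ hpos]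
          nlinarith
        _ ≤ ∑ n ∈ Finset.Ico k m, volume (I n) :=
          Finset.card_nsmul_le_sum _ _ _ hlen
  calc ENNReal.ofReal (2*ε) ≤ ∑ n ∈ Finset.Ico k m, volume (I n) := hsum
    _ = volume (⋃ n ∈ Finset.Ico k m, I n) := hmeas.symm
    _ ≤ volume (X ∩ Set.Icc s (s+4)) :=
        measure_mono (Set.iUnion₂_subset hsub)

theorem stmt16 (ε : ℝ) (hε : 0 < ε) :
    let Xε : Set ℝ := {x : ℝ | ∃ n : ℕ, 0 < n ∧
      (|x - Real.sqrt n| < ε / Real.sqrt n ∨ |x + Real.sqrt n| < ε / Real.sqrt n)}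
    ∃ N c : ℝ, 0 < N ∧ 0 < c ∧ ∀ r : ℝ,
      c < (volume (Xε ∩ Set.Icc r (r + N))).toReal / N := by
  intro Xε
  set ε' := min ε 1 with hε'def
  have hε'0 : 0 < ε' := lt_min hε one_pos
  have hε'1 : ε' ≤ 1 := min_le_right _ _
  have hε'ε : ε' ≤ ε := min_le_left _ _
  have hsub : {x : ℝ | ∃ n : ℕ, 0 < n ∧
      (|x - Real.sqrt n| < ε' / Real.sqrt n ∨ |x + Real.sqrt n| < ε' / Real.sqrt n)} ⊆ Xε := by
    rintro x ⟨n, hn, h⟩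
    have hrn : (0:ℝ) < Real.sqrt n := Real.sqrt_pos.2 (by exact_mod_cast hn)
    have hdiv : ε' / Real.sqrt n ≤ ε / Real.sqrt n := by
      gcongr
    exact ⟨n, hn, h.imp (fun h1 => lt_of_lt_of_le h1 hdiv) (fun h1 => lt_of_lt_of_le h1 hdiv)⟩
  have hkey : ∀ s : ℝ, 1 ≤ s → ENNReal.ofReal (2*ε') ≤ volume (Xε ∩ Set.Icc s (s+4)) :=
    fun s hs => (key16 ε' hε'0 hε'1 s hs).trans
      (measure_mono (Set.inter_subset_inter_left _ hsub))
  have hsymm : ∀ a b : ℝ, volume (Xε ∩ Set.Icc a b) = volume (Xε ∩ Set.Icc (-b) (-a)) := by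
    intro a b
    have hneg : -(Xε ∩ Set.Icc a b) = Xε ∩ Set.Icc (-b) (-a) := by
      ext x
      simp only [Set.mem_neg, Set.mem_inter_iff, Set.mem_Icc, Set.mem_setOf_eq, Xε]
      constructor
      · rintro ⟨⟨n, hn, h⟩, h1, h2⟩
        refine ⟨⟨n, hn, ?_⟩, by linarith, by linarith⟩
        rcases h with h | h
        · right; rw [show x + Real.sqrt n = -(-x - Real.sqrt n) by ring, abs_neg]; exact h
        · left; rw [show x - Real.sqrt n = -(-x + Real.sqrt n) by ring, abs_neg]; exact h
      · rintro ⟨⟨n, hn, h⟩, h1, h2⟩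
        refine ⟨⟨n, hn, ?_⟩, by linarith, by linarith⟩
        rcases h with h | h
        · right; rw [show -x + Real.sqrt n = -(x - Real.sqrt n) by ring, abs_neg]; exact h
        · left; rw [show -x - Real.sqrt n = -(x + Real.sqrt n) by ring, abs_neg]; exact h
    rw [← hneg, Measure.measure_neg volume]
  refine ⟨12, ε'/12, by norm_num, by positivity, fun r => ?_⟩
  have hbound : ENNReal.ofReal (2*ε') ≤ volume (Xε ∩ Set.Icc r (r + 12)) := by
    rcases le_or_gt (-6) r with hr | hr
    · refine (hkey (r+7) (by linarith)).trans (measure_mono ?_)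
      apply Set.inter_subset_inter_right
      apply Set.Icc_subset_Icc <;> linarith
    · have h1 := hkey (-(r+5)) (by linarith)
      rw [hsymm (-(r+5)) (-(r+5)+4)] at h1
      refine h1.trans (measure_mono ?_)
      apply Set.inter_subset_inter_right
      apply Set.Icc_subset_Icc <;> · ring_nf; linarith
  have hfin : volume (Xε ∩ Set.Icc r (r + 12)) ≠ ⊤ := by
    refine ne_top_of_le_ne_top ?_ (measure_mono Set.inter_subset_right)
    rw [Real.volume_Icc]
    exact ENNReal.ofReal_ne_top
  have htr : 2*ε' ≤ (volume (Xε ∩ Set.Icc r (r + 12))).toReal := by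
    have := ENNReal.toReal_mono hfin hbound
    rwa [ENNReal.toReal_ofReal (by positivity)] at this
  linarith [htr]
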